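/- arXiv:0705.3931 — 6 statements merged into one kernel-verified Lean document; each statement's English description precedes it below -/
import Mathlib

section
/- Let S be a commutative Noetherian ring, I and I_q ideals with I_q ⊆ I, and suppose the row ideal K = I_q : I is a prime ideal that does not contain I. Then I_q : I = I_q : I^∞, i.e., the row ideal equals the morphism fiber ideal. -/
namespace Ideal

variable {R : Type*} [CommSemiring R]

theorem mul_mem_colon_of_mem_colon_mul {J I K : Ideal R} {x a : R} (ha : a ∈ I)
    (hx : x ∈ J.colon ((I * K : Ideal R) : Set R)) : x * a ∈ J.colon (K : Set R) :=
  Submodule.mem_colon.mpr fun k hk ↦ by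
    simpa only [smul_eq_mul, mul_assoc] using Submodule.mem_colon.mp hx _ (mul_mem_mul ha hk)

/-- For `a ∈ I` outside `J : I`, `x I^(n+2) ⊆ J` gives `x a I^(n+1) ⊆ J`, so `x a ∈ J : I` by
induction, and primality of `J : I` cancels `a`. -/
theorem colon_pow_succ_le_colon_of_isPrime {J I : Ideal R} (hprime : (J.colon I).IsPrime)
    (hnc : ¬ I ≤ J.colon I) (n : ℕ) : J.colon ((I ^ (n + 1) : Ideal R) : Set R) ≤ J.colon I := by
  obtain ⟨a, haI, haP⟩ := SetLike.not_le_iff_exists.mp hnc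
  induction n with
  | zero => simp
  | succ n ih =>
    intro x hx
    rw [pow_succ'] at hx
    exact (hprime.mem_or_mem (ih (mul_mem_colon_of_mem_colon_mul haI hx))).resolve_right haP

end Ideal

theorem rowIdeal_eq_saturation_of_prime_general {S : Type*} [CommRing S]
    (I Iq : Ideal S)
    (hprime : (Iq.colon I).IsPrime) (hnc : ¬ I ≤ Iq.colon I) :
    Iq.colon I = ⨆ j : ℕ, Iq.colon ((I ^ (j + 1) : Ideal S) : Set S) :=
  le_antisymm (le_iSup_of_le 0 (by simp))
    (iSup_le (Ideal.colon_pow_succ_le_colon_of_isPrime hprime hnc))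

theorem rowIdeal_eq_saturation_of_prime {S : Type*} [CommRing S] [IsNoetherianRing S]
    (I Iq : Ideal S) (h : Iq ≤ I)
    (hprime : (Iq.colon I).IsPrime) (hnc : ¬ I ≤ Iq.colon I) :
    Iq.colon I = ⨆ j : ℕ, Iq.colon ((I ^ (j + 1) : Ideal S) : Set S) :=
  rowIdeal_eq_saturation_of_prime_general I Iq hprime hnc
end

section
/- Let S = k[a,b,c,d] over a field k, J = (ab², ac², b²c, bc²), and I = J + (bcd). Then the colon ideal J : I equals the ideal (b, c). -/
open MvPolynomial

theorem exampleA_rowIdeal {k : Type*} [Field k] :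
    letI S := MvPolynomial (Fin 4) k
    letI a : S := X 0
    letI b : S := X 1
    letI c : S := X 2
    letI d : S := X 3
    letI J : Ideal S := Ideal.span {a * b ^ 2, a * c ^ 2, b ^ 2 * c, b * c ^ 2}
    letI I : Ideal S := J ⊔ Ideal.span {b * c * d}
    J.colon I = Ideal.span {b, c} := by
  set S := MvPolynomial (Fin 4) k
  set a : S := X 0 with ha
  set b : S := X 1 with hb
  set c : S := X 2 with hc
  set d : S := X 3 with hd
  set J : Ideal S := Ideal.span {a * b ^ 2, a * c ^ 2, b ^ 2 * c, b * c ^ 2} with hJ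
  set I : Ideal S := J ⊔ Ideal.span {b * c * d} with hI
  -- monomial exponents
  set g1 : Fin 4 →₀ ℕ := Finsupp.single 0 1 + Finsupp.single 1 2 with hg1
  set g2 : Fin 4 →₀ ℕ := Finsupp.single 0 1 + Finsupp.single 2 2 with hg2
  set g3 : Fin 4 →₀ ℕ := Finsupp.single 1 2 + Finsupp.single 2 1 with hg3
  set g4 : Fin 4 →₀ ℕ := Finsupp.single 1 1 + Finsupp.single 2 2 with hg4
  set e : Fin 4 →₀ ℕ := Finsupp.single 1 1 + Finsupp.single 2 1 + Finsupp.single 3 1 with he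
  have hX : ∀ i : Fin 4, (X i : S) = monomial (Finsupp.single i 1) 1 := fun i => by
    rw [← pow_one (X i : S), X_pow_eq_monomial]
  have hm1 : a * b ^ 2 = monomial g1 (1 : k) := by
    rw [ha, hb, hX, X_pow_eq_monomial, monomial_mul, one_mul, hg1]
  have hm2 : a * c ^ 2 = monomial g2 (1 : k) := by
    rw [ha, hc, hX, X_pow_eq_monomial, monomial_mul, one_mul, hg2]
  have hm3 : b ^ 2 * c = monomial g3 (1 : k) := by
    rw [hb, hc, hX 2, X_pow_eq_monomial, monomial_mul, one_mul, hg3]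
  have hm4 : b * c ^ 2 = monomial g4 (1 : k) := by
    rw [hb, hc, hX 1, X_pow_eq_monomial, monomial_mul, one_mul, hg4]
  have hme : b * c * d = monomial e (1 : k) := by
    rw [hb, hc, hd, hX, hX, hX, monomial_mul, monomial_mul, one_mul, one_mul, he]
  have hJmon : J = Ideal.span ((fun s => monomial s (1 : k)) ''
      ({g1, g2, g3, g4} : Set (Fin 4 →₀ ℕ))) := by
    rw [hJ, hm1, hm2, hm3, hm4]
    congr 1
    simp [Set.image_insert_eq]
  apply le_antisymm
  · -- hard direction
    intro f hf
    have hbcd : b * c * d ∈ I := by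
      exact le_sup_right (α := Ideal S) (Ideal.subset_span (Set.mem_singleton _))
    have hfJ : f * (b * c * d) ∈ J := Submodule.mem_colon.mp hf _ hbcd
    have hspan : Ideal.span ({b, c} : Set S) =
        Ideal.span (MvPolynomial.X '' ({1, 2} : Set (Fin 4))) := by
      rw [Set.image_insert_eq, Set.image_singleton, hb, hc]
    rw [hspan, mem_ideal_span_X_image]
    intro m hm
    rw [hJmon, hme, mem_ideal_span_monomial_image] at hfJ
    have hsupp : m + e ∈ (f * monomial e (1 : k)).support := by
      rw [MvPolynomial.mem_support_iff, coeff_mul_monomial', if_pos le_add_self,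
        add_tsub_cancel_right, mul_one]
      exact MvPolynomial.mem_support_iff.mp hm
    obtain ⟨si, hsi, hle⟩ := hfJ _ hsupp
    by_contra hcon
    push_neg at hcon
    have h1 : m 1 = 0 := hcon 1 (by simp)
    have h2 : m 2 = 0 := hcon 2 (by simp)
    have hle1 := hle 1
    have hle2 := hle 2
    simp only [Finsupp.add_apply] at hle1 hle2
    rcases hsi with h | h | h | h <;> subst h <;>
      simp [hg1, hg2, hg3, hg4, he, h1, h2, Finsupp.single_apply] at hle1 hle2
  · -- easy direction
    rw [Ideal.span_le]
    rintro x (rfl | rfl)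
    · rw [SetLike.mem_coe, Submodule.mem_colon]
      intro p hp
      rw [hI] at hp
      obtain ⟨j, hj, s, hs, rfl⟩ := Submodule.mem_sup.mp hp
      rw [Ideal.mem_span_singleton'] at hs
      obtain ⟨t, rfl⟩ := hs
      rw [smul_eq_mul, mul_add]
      refine Ideal.add_mem _ (Ideal.mul_mem_left _ _ hj) ?_
      have : b * (t * (b * c * d)) = (t * d) * (b ^ 2 * c) := by ring
      rw [this]
      exact Ideal.mul_mem_left _ _ (Ideal.subset_span (by simp))
    · rw [SetLike.mem_coe, Submodule.mem_colon]
      intro p hp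
      rw [hI] at hp
      obtain ⟨j, hj, s, hs, rfl⟩ := Submodule.mem_sup.mp hp
      rw [Ideal.mem_span_singleton'] at hs
      obtain ⟨t, rfl⟩ := hs
      rw [smul_eq_mul, mul_add]
      refine Ideal.add_mem _ (Ideal.mul_mem_left _ _ hj) ?_
      have : c * (t * (b * c * d)) = (t * d) * (b * c ^ 2) := by ring
      rw [this]
      exact Ideal.mul_mem_left _ _ (Ideal.subset_span (by simp))
end

section
/- Let S be a commutative Noetherian local ring with maximal ideal P, let I be an ideal of S that is of linear type (the canonical surjection from the symmetric algebra Sym(I) onto the Rees algebra S[It] is an isomorphism), and let J ⊊ I be a proper subideal. Then I is not integral over J, i.e., I is not contained in the integral closure of J. -/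
open Polynomial

/-- The canonical linear map from an ideal `I` to the Rees algebra `S[It] ⊆ S[t]`,
sending `x ∈ I` to the degree-one element `x·t`. -/
noncomputable def reesIota {S : Type*} [CommRing S] (I : Ideal S) :
    I →ₗ[S] reesAlgebra I where
  toFun x := ⟨Polynomial.monomial 1 (x : S),
    reesAlgebra.monomial_mem.mpr (by simp [x.2])⟩
  map_add' x y := Subtype.ext (by simp)
  map_smul' r x := Subtype.ext (by simp [Polynomial.smul_monomial, smul_eq_mul])

/-- The canonical algebra map from the tensor algebra of `I` to the Rees algebra of `I`.
The symmetric algebra `Sym(I)` is the quotient of the tensor algebra by the two-sided ideal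
generated by the commutators `ι x * ι y - ι y * ι x`, so the canonical map
`Sym(I) → S[It]` is an isomorphism iff `reesLift I` is surjective and its kernel is
exactly that two-sided ideal. -/
noncomputable def reesLift {S : Type*} [CommRing S] (I : Ideal S) :
    TensorAlgebra S I →ₐ[S] reesAlgebra I :=
  TensorAlgebra.lift S (reesIota I)

/-- `I` is of linear type: the canonical surjection `Sym(I) → S[It]` from the symmetric
algebra onto the Rees algebra is an isomorphism. Equivalently, the lift from the tensor
algebra is surjective with kernel the two-sided ideal generated by commutators of the
canonical generators. -/
def Ideal.IsLinearType {S : Type*} [CommRing S] (I : Ideal S) : Prop :=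
  Function.Surjective (reesLift I) ∧
    RingHom.ker (reesLift I).toRingHom =
      Ideal.span {z : TensorAlgebra S I | ∃ (x y : I) (b : TensorAlgebra S I),
        z = (TensorAlgebra.ι S x * TensorAlgebra.ι S y -
             TensorAlgebra.ι S y * TensorAlgebra.ι S x) * b}

/-- `x` is integral over the ideal `J`: it satisfies an equation
`x^n + a_1 x^{n-1} + ⋯ + a_n = 0` with `a_i ∈ J^i`. -/
def Ideal.IsIntegralElem' {S : Type*} [CommRing S] (J : Ideal S) (x : S) : Prop :=
  ∃ n : ℕ, 0 < n ∧ ∃ a : ℕ → S, (∀ i, 1 ≤ i → i ≤ n → a i ∈ J ^ i) ∧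
    x ^ n + ∑ i ∈ Finset.range n, a (i + 1) * x ^ (n - 1 - i) = 0

theorem not_integral_of_linearType {S : Type*} [CommRing S] [IsNoetherianRing S]
    [IsLocalRing S] (I J : Ideal S)
    (hlt : I.IsLinearType) (hJI : J < I) :
    ¬ ∀ x ∈ I, J.IsIntegralElem' x := by
  intro hint
  set P : Ideal S := IsLocalRing.maximalIdeal S with hP
  apply hJI.ne'
  refine le_antisymm ?_ hJI.le
  have hfg : (I : Submodule S S).FG := IsNoetherian.noetherian I
  have hjac : P ≤ Ideal.jacobson ⊥ :=
    le_of_eq (IsLocalRing.jacobson_eq_maximalIdeal ⊥ bot_ne_top).symm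
  refine Submodule.le_of_le_smul_of_le_jacobson_bot hfg hjac ?_
  intro x hx
  by_contra hxK
  -- set up the quotient vector space
  set K' : Submodule S I :=
    Submodule.comap I.subtype ((J : Submodule S S) ⊔ P • (I : Submodule S S)) with hK'
  have hT : Module.IsTorsionBySet S ((↥I) ⧸ K') ↑P :=
    (Module.isTorsionBySet_quotient_iff K' (↑P)).mpr
      (fun y r hr => Submodule.mem_sup_right (Submodule.smul_mem_smul hr y.2))
  set M := (↥I) ⧸ K' with hM
  letI : Module (S ⧸ P) M := hT.module
  letI : IsScalarTower S (S ⧸ P) M := hT.isScalarTower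
  letI : Field (S ⧸ P) := Ideal.Quotient.field P
  set v : M := Submodule.Quotient.mk ⟨x, hx⟩ with hv
  have hvne : v ≠ 0 := by
    rw [hv, ne_eq, Submodule.Quotient.mk_eq_zero]
    exact hxK
  obtain ⟨f, hf⟩ : ∃ f : Module.Dual (S ⧸ P) M, f v ≠ 0 := by
    by_contra h
    push_neg at h
    exact hvne ((Module.forall_dual_apply_eq_zero_iff (S ⧸ P) v).mp h)
  set f' : M →ₗ[S ⧸ P] (S ⧸ P) := (f v)⁻¹ • f with hf'
  set g : (↥I) →ₗ[S] (S ⧸ P) := (f'.restrictScalars S).comp K'.mkQ with hg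
  have hgx : g ⟨x, hx⟩ = 1 := by
    simp only [hg, hf', LinearMap.comp_apply, LinearMap.restrictScalars_apply,
      LinearMap.smul_apply, smul_eq_mul]
    rw [show K'.mkQ ⟨x, hx⟩ = v from rfl]
    exact inv_mul_cancel₀ hf
  have hgJ : ∀ y : ↥I, (y : S) ∈ J → g y = 0 := by
    intro y hy
    have : K'.mkQ y = 0 := by
      rw [Submodule.mkQ_apply, Submodule.Quotient.mk_eq_zero]
      exact Submodule.mem_sup_left hy
    simp [hg, this]
  -- the algebra map Φ
  set lam : (↥I) →ₗ[S] Polynomial (S ⧸ P) :=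
    ((LinearMap.toSpanSingleton (S ⧸ P) (Polynomial (S ⧸ P)) X).restrictScalars S).comp g
    with hlam
  set Φ : TensorAlgebra S I →ₐ[S] Polynomial (S ⧸ P) := TensorAlgebra.lift S lam with hΦ
  have hΦι : ∀ y : ↥I, Φ (TensorAlgebra.ι S y) = g y • X := by
    intro y
    rw [hΦ, TensorAlgebra.lift_ι_apply]
    rfl
  -- Φ kills the commutator ideal
  have hker : Ideal.span {z : TensorAlgebra S I | ∃ (x y : I) (b : TensorAlgebra S I),
        z = (TensorAlgebra.ι S x * TensorAlgebra.ι S y -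
             TensorAlgebra.ι S y * TensorAlgebra.ι S x) * b} ≤ RingHom.ker Φ.toRingHom := by
    rw [Ideal.span_le]
    rintro z ⟨y₁, y₂, b, rfl⟩
    rw [SetLike.mem_coe, RingHom.mem_ker, AlgHom.toRingHom_eq_coe, RingHom.coe_coe,
      map_mul, map_sub, map_mul, map_mul, mul_comm (Φ (TensorAlgebra.ι S y₁)), sub_self,
      zero_mul]
  -- the composite into S[X]
  set L : TensorAlgebra S I →ₐ[S] Polynomial S := ((reesAlgebra I).val).comp (reesLift I)
    with hL
  have hLι : ∀ y : ↥I, L (TensorAlgebra.ι S y) = Polynomial.monomial 1 (y : S) := by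
    intro y
    rw [hL, AlgHom.comp_apply, reesLift, TensorAlgebra.lift_ι_apply]
    rfl
  -- the key claim: elements of J^(j+1) lift nicely
  have claim : ∀ j : ℕ, ∀ c ∈ J ^ (j + 1), ∃ w : TensorAlgebra S I,
      L w = Polynomial.monomial (j + 1) c ∧ Φ w = 0 := by
    intro j
    induction j with
    | zero =>
      intro c hc
      rw [pow_one] at hc
      refine ⟨TensorAlgebra.ι S ⟨c, hJI.le hc⟩, hLι _, ?_⟩
      rw [hΦι, hgJ _ hc, zero_smul]
    | succ j ih =>
      intro c hc
      rw [pow_succ] at hc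
      refine Submodule.mul_induction_on (C := fun c =>
        ∃ w : TensorAlgebra S I, L w = Polynomial.monomial (j + 1 + 1) c ∧ Φ w = 0) hc
        ?_ ?_
      · intro m hm n hn
        obtain ⟨w, hw1, hw2⟩ := ih m hm
        refine ⟨w * TensorAlgebra.ι S ⟨n, hJI.le hn⟩, ?_, ?_⟩
        · rw [map_mul, hw1, hLι, Polynomial.monomial_mul_monomial]
        · rw [map_mul, hw2, zero_mul]
      · intro c₁ c₂ h₁ h₂
        obtain ⟨w₁, hw11, hw12⟩ := h₁
        obtain ⟨w₂, hw21, hw22⟩ := h₂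
        exact ⟨w₁ + w₂, by rw [map_add, hw11, hw21, ← map_add], by rw [map_add, hw12, hw22,
          add_zero]⟩
  -- the integral equation
  obtain ⟨n, hn, a, ha, heq⟩ := hint x hx
  have hW : ∀ i : ℕ, ∃ w : TensorAlgebra S I,
      L w = Polynomial.monomial (i + 1) (if i < n then a (i + 1) else 0) ∧ Φ w = 0 := by
    intro i
    by_cases h : i < n
    · rw [if_pos h]
      exact claim i _ (ha (i + 1) (by omega) (by omega))
    · rw [if_neg h]
      exact ⟨0, by simp, by simp⟩
  choose w hw1 hw2 using hW
  set ξ : TensorAlgebra S I := TensorAlgebra.ι S (⟨x, hx⟩ : ↥I) with hξ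
  set E : TensorAlgebra S I := ξ ^ n + ∑ i ∈ Finset.range n, w i * ξ ^ (n - 1 - i) with hE
  have hLξ : L ξ = Polynomial.monomial 1 x := hLι ⟨x, hx⟩
  -- L E = 0
  have hLE : L E = 0 := by
    have hterm : ∀ i ∈ Finset.range n, L (w i * ξ ^ (n - 1 - i)) =
        Polynomial.monomial n (a (i + 1) * x ^ (n - 1 - i)) := by
      intro i hi
      rw [Finset.mem_range] at hi
      rw [map_mul, map_pow, hLξ, hw1, if_pos hi, Polynomial.monomial_pow,
        Polynomial.monomial_mul_monomial]
      have he : i + 1 + 1 * (n - 1 - i) = n := by omega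
      rw [he]
    rw [hE, map_add, map_sum, Finset.sum_congr rfl hterm, map_pow, hLξ,
      Polynomial.monomial_pow, one_mul,
      ← map_sum (Polynomial.monomial n) (fun i => a (i + 1) * x ^ (n - 1 - i)) (Finset.range n),
      ← map_add, heq, map_zero]
  -- hence E is in the kernel of the Rees lift
  have hEker : E ∈ RingHom.ker (reesLift I).toRingHom := by
    simp only [RingHom.mem_ker, AlgHom.toRingHom_eq_coe, RingHom.coe_coe]
    have h := hLE
    rw [hL, AlgHom.comp_apply] at h
    exact Subtype.ext h
  have hΦE : Φ E = 0 := by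
    rw [hlt.2] at hEker
    have := hker hEker
    rwa [RingHom.mem_ker, AlgHom.toRingHom_eq_coe, RingHom.coe_coe] at this
  have hΦE' : Φ E = X ^ n := by
    have hterm : ∀ i ∈ Finset.range n, Φ (w i * ξ ^ (n - 1 - i)) = 0 := by
      intro i _
      rw [map_mul, hw2, zero_mul]
    rw [hE, map_add, map_sum, Finset.sum_congr rfl hterm, Finset.sum_const_zero, add_zero,
      map_pow, hξ, hΦι, hgx, one_smul]
  rw [hΦE] at hΦE'
  exact Polynomial.X_ne_zero ((pow_eq_zero_iff hn.ne').mp hΦE'.symm)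
end

section
/- Let S = ℂ[s,t], with F₀ = −s(s−t)(s²+t²+(s+t)(s−it)), F₁ = −t(s−t)(s²+t²+(s+t)(is+t)), F₂ = st(s²+t²), F₃ = −st(s²−t²), where i ∈ ℂ is a square root of −1. Then the ideal (F₀, F₁, F₂, F₃) equals the ideal (s⁴, s³t, st³, t⁴). -/
open MvPolynomial

theorem quartic_generators_change_of_basis :
    letI s : MvPolynomial (Fin 2) ℂ := X 0
    letI t : MvPolynomial (Fin 2) ℂ := X 1
    letI i : MvPolynomial (Fin 2) ℂ := C Complex.I
    letI F0 : MvPolynomial (Fin 2) ℂ :=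
      -s * (s - t) * (s ^ 2 + t ^ 2 + (s + t) * (s - i * t))
    letI F1 : MvPolynomial (Fin 2) ℂ :=
      -t * (s - t) * (s ^ 2 + t ^ 2 + (s + t) * (i * s + t))
    letI F2 : MvPolynomial (Fin 2) ℂ := s * t * (s ^ 2 + t ^ 2)
    letI F3 : MvPolynomial (Fin 2) ℂ := -(s * t) * (s ^ 2 - t ^ 2)
    Ideal.span {F0, F1, F2, F3} =
      Ideal.span {s ^ 4, s ^ 3 * t, s * t ^ 3, t ^ 4} := by
  set s : MvPolynomial (Fin 2) ℂ := X 0 with hs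
  set t : MvPolynomial (Fin 2) ℂ := X 1 with ht
  set i : MvPolynomial (Fin 2) ℂ := C Complex.I with hi
  set F0 : MvPolynomial (Fin 2) ℂ :=
    -s * (s - t) * (s ^ 2 + t ^ 2 + (s + t) * (s - i * t)) with hF0d
  set F1 : MvPolynomial (Fin 2) ℂ :=
    -t * (s - t) * (s ^ 2 + t ^ 2 + (s + t) * (i * s + t)) with hF1d
  set F2 : MvPolynomial (Fin 2) ℂ := s * t * (s ^ 2 + t ^ 2) with hF2d
  set F3 : MvPolynomial (Fin 2) ℂ := -(s * t) * (s ^ 2 - t ^ 2) with hF3d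
  set A : Ideal (MvPolynomial (Fin 2) ℂ) := Ideal.span {F0, F1, F2, F3} with hA
  set B : Ideal (MvPolynomial (Fin 2) ℂ) :=
    Ideal.span {s ^ 4, s ^ 3 * t, s * t ^ 3, t ^ 4} with hB
  have hs4 : s ^ 4 ∈ B := Ideal.subset_span (by simp)
  have hs3t : s ^ 3 * t ∈ B := Ideal.subset_span (by simp)
  have hst3 : s * t ^ 3 ∈ B := Ideal.subset_span (by simp)
  have ht4 : t ^ 4 ∈ B := Ideal.subset_span (by simp)
  have hF0 : F0 ∈ A := Ideal.subset_span (Set.mem_insert _ _)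
  have hF1 : F1 ∈ A := Ideal.subset_span (Set.mem_insert_of_mem _ (Set.mem_insert _ _))
  have hF2 : F2 ∈ A := Ideal.subset_span (Set.mem_insert_of_mem _ (Set.mem_insert_of_mem _ (Set.mem_insert _ _)))
  have hF3 : F3 ∈ A := Ideal.subset_span (Set.mem_insert_of_mem _ (Set.mem_insert_of_mem _ (Set.mem_insert_of_mem _ rfl)))
  have htwo : (2 : MvPolynomial (Fin 2) ℂ) = C 2 := (map_ofNat C 2).symm
  have half : ∀ x : MvPolynomial (Fin 2) ℂ, x = C (1/2 : ℂ) * (2 * x) := by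
    intro x
    rw [htwo, ← mul_assoc, ← C_mul]
    norm_num
  apply le_antisymm
  · rw [hA, Ideal.span_le]
    intro x hx
    simp only [Set.mem_insert_iff, Set.mem_singleton_iff] at hx
    rcases hx with h | h | h | h <;> subst h
    · have e : F0 = (-2 : MvPolynomial (Fin 2) ℂ) * s ^ 4 + (1 + i) * (s ^ 3 * t)
          + (1 - i) * (s * t ^ 3) := by ring
      rw [e]
      exact B.add_mem (B.add_mem (B.mul_mem_left _ hs4) (B.mul_mem_left _ hs3t))
        (B.mul_mem_left _ hst3)
    · have e : F1 = -((1 + i) * (s ^ 3 * t)) - (1 - i) * (s * t ^ 3)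
          + (2 : MvPolynomial (Fin 2) ℂ) * t ^ 4 := by ring
      rw [e]
      exact B.add_mem (B.sub_mem (B.neg_mem (B.mul_mem_left _ hs3t))
        (B.mul_mem_left _ hst3)) (B.mul_mem_left _ ht4)
    · have e : F2 = s ^ 3 * t + s * t ^ 3 := by ring
      rw [e]
      exact B.add_mem hs3t hst3
    · have e : F3 = -(s ^ 3 * t) + s * t ^ 3 := by ring
      rw [e]
      exact B.add_mem (B.neg_mem hs3t) hst3
  · rw [hB, Ideal.span_le]
    intro x hx
    simp only [Set.mem_insert_iff, Set.mem_singleton_iff] at hx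
    rcases hx with h | h | h | h <;> subst h
    · have e : (2 : MvPolynomial (Fin 2) ℂ) * s ^ 4 = -F0 + F2 - i * F3 := by ring
      rw [half (s ^ 4), e]
      exact A.mul_mem_left _ (A.sub_mem (A.add_mem (A.neg_mem hF0) hF2)
        (A.mul_mem_left _ hF3))
    · have e : (2 : MvPolynomial (Fin 2) ℂ) * (s ^ 3 * t) = F2 - F3 := by ring
      rw [half (s ^ 3 * t), e]
      exact A.mul_mem_left _ (A.sub_mem hF2 hF3)
    · have e : (2 : MvPolynomial (Fin 2) ℂ) * (s * t ^ 3) = F2 + F3 := by ring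
      rw [half (s * t ^ 3), e]
      exact A.mul_mem_left _ (A.add_mem hF2 hF3)
    · have e : (2 : MvPolynomial (Fin 2) ℂ) * t ^ 4 = F1 + F2 - i * F3 := by ring
      rw [half (t ^ 4), e]
      exact A.mul_mem_left _ (A.sub_mem (A.add_mem hF1 hF2) (A.mul_mem_left _ hF3))
end

section
/- Let S be a commutative Noetherian ring and I, I_q ideals with I_q ⊆ I. Suppose I_q : I is a prime ideal not containing I. Then for all d ≥ 1, I_q : I = I_q I^{d-1} : I^d. -/
/-!
Write `P = Iq : I` and `I ^ d = I * I ^ (d - 1)`. Multiplying by `I ^ (d - 1)` gives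
`P ⊆ Iq I ^ (d - 1) : I ^ d`. Conversely, if `x I ^ d ⊆ Iq I ^ (d - 1)` and `z ∈ I ^ (d - 1)`, then
`x z I ⊆ Iq`, so `x z ∈ P`; as `P` is prime and does not contain `I`, it does not contain
`I ^ (d - 1)`, and choosing `z ∉ P` gives `x ∈ P`.
-/

namespace Ideal

variable {R : Type*} [CommSemiring R] {J K L : Ideal R}

theorem colon_le_mul_colon_mul : J.colon K ≤ (J * L).colon (K * L) := by
  intro x hx
  rw [Submodule.mem_colon] at hx ⊢
  intro s hs
  refine Submodule.mul_induction_on hs (fun k hk l hl ↦ ?_) fun a b ha hb ↦ ?_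
  · simpa only [smul_eq_mul, ← mul_assoc] using mul_mem_mul (hx k hk) hl
  · simpa only [smul_add] using add_mem ha hb

theorem mul_mem_colon_of_mem_mul_colon_mul {x z : R} (hx : x ∈ (J * L).colon (K * L))
    (hz : z ∈ L) : x * z ∈ J.colon K := by
  refine Submodule.mem_colon.mpr fun k hk ↦ mul_le_left (I := J) (J := L) ?_
  have := Submodule.mem_colon.mp hx _ (mul_mem_mul hk hz)
  simpa only [smul_eq_mul, mul_assoc, mul_comm z] using this

theorem colon_eq_mul_colon_mul_of_isPrime (hP : (J.colon K).IsPrime) (hL : ¬ L ≤ J.colon K) :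
    J.colon K = (J * L).colon (K * L) := by
  refine colon_le_mul_colon_mul.antisymm fun x hx ↦ ?_
  obtain ⟨z, hzL, hzP⟩ := SetLike.not_le_iff_exists.mp hL
  exact (hP.mem_or_mem (mul_mem_colon_of_mem_mul_colon_mul hx hzL)).resolve_right hzP

end Ideal

theorem rowIdeal_eq_power_rowIdeal_general {S : Type*} [CommRing S]
    (I Iq : Ideal S)
    (hprime : (Iq.colon I).IsPrime) (hnc : ¬ I ≤ Iq.colon I) :
    ∀ d : ℕ, 1 ≤ d → Iq.colon I = (Iq * I ^ (d - 1)).colon (I ^ d : Ideal S) := by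
  intro d hd
  obtain ⟨e, rfl⟩ : ∃ e, d = e + 1 := ⟨d - 1, by omega⟩
  rw [Nat.add_sub_cancel, pow_succ']
  exact Ideal.colon_eq_mul_colon_mul_of_isPrime hprime fun hle ↦ hnc (hprime.le_of_pow_le hle)

theorem rowIdeal_eq_power_rowIdeal {S : Type*} [CommRing S] [IsNoetherianRing S]
    (I Iq : Ideal S) (h : Iq ≤ I)
    (hprime : (Iq.colon I).IsPrime) (hnc : ¬ I ≤ Iq.colon I) :
    ∀ d : ℕ, 1 ≤ d → Iq.colon I = (Iq * I ^ (d - 1)).colon (I ^ d : Ideal S) :=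
  rowIdeal_eq_power_rowIdeal_general I Iq hprime hnc
end

section
/- Let S = k[x_0,x_1,x_2] over an infinite field k, let Q be a nonzero quadratic form and F a cubic form with gcd(Q,F) = 1. Let I = (x_0Q, x_1Q, x_2Q, F) and J = (x_0Q, x_1Q, x_2Q). Then J : I^∞ = (Q). -/
/-!
Write `m = (x₀, x₁, x₂)`, so that `J = m Q`. Since `F` has positive degree it lies in `m`, hence
`Q F ∈ J` and `Q I ⊆ J`, i.e. `(Q) ⊆ J : I`. Conversely, if `g Iʲ ⊆ J ⊆ (Q)` then `Q ∣ g Fʲ`,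
and `Q ∣ g` because `Q` and `F` are relatively prime.
-/

open MvPolynomial

theorem MvPolynomial.IsHomogeneous.mem_span_range_X {σ R : Type*} [CommSemiring R]
    {p : MvPolynomial σ R} {n : ℕ} (hp : p.IsHomogeneous n) (hn : n ≠ 0) :
    p ∈ Ideal.span (Set.range (X : σ → MvPolynomial σ R)) := by
  rw [← Set.image_univ, mem_ideal_span_X_image]
  intro m hm
  obtain ⟨i, hi⟩ : ∃ i, m i ≠ 0 := by
    by_contra! h
    obtain rfl : m = 0 := Finsupp.ext h
    exact hn (by simpa using (hp (mem_support_iff.mp hm)).symm)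
  exact ⟨i, Set.mem_univ i, hi⟩

theorem MvPolynomial.span_X_mul_eq_span_range_X_mul {R : Type*} [CommSemiring R]
    (Q : MvPolynomial (Fin 3) R) :
    Ideal.span {X 0 * Q, X 1 * Q, X 2 * Q} = Ideal.span (Set.range X) * Ideal.span {Q} := by
  rw [Ideal.span_mul_span', Set.mul_singleton, ← Set.range_comp]
  congr 1
  ext
  simp [Fin.exists_fin_succ, eq_comm]

section

variable {R : Type*} [CommRing R]

theorem Ideal.colon_le_span_singleton_of_isRelPrime [DecompositionMonoid R]
    {J I : Ideal R} {Q F : R} (hJ : J ≤ Ideal.span {Q}) (hF : F ∈ I) (hQF : IsRelPrime Q F) :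
    J.colon (I : Set R) ≤ Ideal.span {Q} := fun _ hg =>
  Ideal.mem_span_singleton.2 <|
    hQF.dvd_of_dvd_mul_right (Ideal.mem_span_singleton.1 (hJ (Submodule.mem_colon.1 hg F hF)))

theorem Ideal.mem_colon_sup_span_singleton {J : Ideal R} {Q F : R} (h : Q * F ∈ J) :
    Q ∈ J.colon ((J ⊔ Ideal.span {F} : Ideal R) : Set R) := by
  refine Submodule.mem_colon.2 fun p hp => ?_
  obtain ⟨a, ha, b, hb, rfl⟩ := Submodule.mem_sup.1 hp
  obtain ⟨c, rfl⟩ := Ideal.mem_span_singleton'.1 hb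
  rw [smul_eq_mul, mul_add, mul_left_comm]
  exact J.add_mem (J.mul_mem_left Q ha) (J.mul_mem_left c h)

end

theorem cubic_example_saturation_general {k : Type*} [Field k]
    (Q F : MvPolynomial (Fin 3) k)
    (hFdeg : F.IsHomogeneous 3)
    (hrp : IsRelPrime Q F) :
    letI x0 : MvPolynomial (Fin 3) k := X 0
    letI x1 : MvPolynomial (Fin 3) k := X 1
    letI x2 : MvPolynomial (Fin 3) k := X 2
    letI I : Ideal (MvPolynomial (Fin 3) k) := Ideal.span {x0 * Q, x1 * Q, x2 * Q, F}
    letI J : Ideal (MvPolynomial (Fin 3) k) := Ideal.span {x0 * Q, x1 * Q, x2 * Q}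
    (⨆ j : ℕ, J.colon ((I ^ (j + 1) : Ideal (MvPolynomial (Fin 3) k)) : Set (MvPolynomial (Fin 3) k))) = Ideal.span {Q} := by
  set I := Ideal.span {X 0 * Q, X 1 * Q, X 2 * Q, F}
  set J := Ideal.span {X 0 * Q, X 1 * Q, X 2 * Q}
  have hI : I = J ⊔ Ideal.span {F} := by
    rw [← Ideal.span_union, Set.insert_union, Set.insert_union, Set.singleton_union]
  have hJ : J = Ideal.span (Set.range X) * Ideal.span {Q} := span_X_mul_eq_span_range_X_mul Q
  have hFI : F ∈ I := hI ▸ Ideal.mem_sup_right (Ideal.mem_span_singleton_self F)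
  have hQF : Q * F ∈ J := hJ ▸ mul_comm F Q ▸
    Ideal.mul_mem_mul (hFdeg.mem_span_range_X three_ne_zero) (Ideal.mem_span_singleton_self Q)
  apply le_antisymm
  · exact iSup_le fun j => Ideal.colon_le_span_singleton_of_isRelPrime
      (hJ ▸ Ideal.mul_le_right) (Ideal.pow_mem_pow hFI _) hrp.pow_right
  · refine le_iSup_of_le 0 ?_
    rw [zero_add, pow_one, hI, Ideal.span_singleton_le_iff_mem]
    exact Ideal.mem_colon_sup_span_singleton hQF

theorem cubic_example_saturation {k : Type*} [Field k] [Infinite k]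
    (Q F : MvPolynomial (Fin 3) k)
    (hQ : Q ≠ 0) (hQdeg : Q.IsHomogeneous 2) (hFdeg : F.IsHomogeneous 3)
    (hrp : IsRelPrime Q F) :
    letI x0 : MvPolynomial (Fin 3) k := X 0
    letI x1 : MvPolynomial (Fin 3) k := X 1
    letI x2 : MvPolynomial (Fin 3) k := X 2
    letI I : Ideal (MvPolynomial (Fin 3) k) := Ideal.span {x0 * Q, x1 * Q, x2 * Q, F}
    letI J : Ideal (MvPolynomial (Fin 3) k) := Ideal.span {x0 * Q, x1 * Q, x2 * Q}
    (⨆ j : ℕ, J.colon ((I ^ (j + 1) : Ideal (MvPolynomial (Fin 3) k)) : Set (MvPolynomial (Fin 3) k))) = Ideal.span {Q} :=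
  cubic_example_saturation_general Q F hFdeg hrp
end
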